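/- arXiv:2605.06525 — 4 statements merged into one kernel-verified Lean document; each statement's English description precedes it below -/
import Mathlib

section
/- For every profile Γ = (Γ^1,…,Γ^k) of meta-actions and every LLM j, define the role-homogeneous meta-action Γ̂^j as follows: draw a pure meta-action M^j = (M_1^j,…,M_m^j) according to Γ^j, then draw actions a_r ∼ M_r^j independently across roles r = 1,…,m, and output the tuple of point-mass mixed actions (δ_{a_1},…,δ_{a_m}). Then for every LLM ℓ and every profile N^{−j} of meta-actions of the LLMs other than j, U_ℓ(Γ̂^j, N^{−j}) = U_ℓ(Γ^j, N^{−j}). -/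
open Finset

namespace MetaGame

/-- A mixed action over a finite action set: a probability vector. -/
def Mixed (α : Type) [Fintype α] : Type :=
  {f : α → ℝ // (∀ a, 0 ≤ f a) ∧ ∑ a, f a = 1}

/-- The point-mass (Dirac) mixed action on `a`. -/
noncomputable def Mixed.dirac {α : Type} [Fintype α] [DecidableEq α] (a : α) : Mixed α :=
  ⟨fun b => if b = a then 1 else 0,
    fun b => by by_cases h : b = a <;> simp [h],
    by simp⟩

/-- A finitely supported probability distribution on `α`. -/
structure FinDist (α : Type) where
  support : Finset α
  w : α → ℝ
  nonneg : ∀ x, 0 ≤ w x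
  sum_one : ∑ x ∈ support, w x = 1
  zero_of_not_mem : ∀ x, x ∉ support → w x = 0

/-- The point mass distribution on `x`. -/
noncomputable def FinDist.pure {α : Type} (x : α) : FinDist α := by
  classical
  exact
    { support := {x}
      w := fun y => if y = x then 1 else 0
      nonneg := fun y => by by_cases h : y = x <;> simp [h]
      sum_one := by simp
      zero_of_not_mem := fun y hy => by
        simp only [Finset.mem_singleton] at hy
        simp [hy] }

variable {m k : ℕ} {A : Fin m → Type} [∀ i, Fintype (A i)] [∀ i, DecidableEq (A i)]

/-- Multilinear extension of a payoff function to profiles of mixed actions. -/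
noncomputable def expPay (u : (∀ r : Fin m, A r) → ℝ) (σ : ∀ r, Mixed (A r)) : ℝ :=
  ∑ a : ∀ r : Fin m, A r, (∏ r, (σ r).1 (a r)) * u a

/-- A pure meta-action: a mixed action for each role. -/
abbrev PureMeta (A : Fin m → Type) [∀ i, Fintype (A i)] : Type := ∀ i, Mixed (A i)

/-- The role-homogeneous pure meta-action instructing pure action `a i` in each role `i`. -/
noncomputable def diracProfile (a : ∀ i : Fin m, A i) : PureMeta A := fun i => Mixed.dirac (a i)

/-- Utility of LLM `j` under a profile of pure meta-actions. -/
noncomputable def Upure (u : ∀ i : Fin m, (∀ r : Fin m, A r) → ℝ) (p : Fin m → Fin k → ℝ)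
    (j : Fin k) (M : Fin k → PureMeta A) : ℝ :=
  ∑ i, ∑ g : Fin m → Fin k,
    if g i = j then (∏ r, p r (g r)) * expPay (u i) (fun r => M (g r) r) else 0

/-- Utility of LLM `j` under a profile of (finitely supported, independent) meta-actions. -/
noncomputable def U (u : ∀ i : Fin m, (∀ r : Fin m, A r) → ℝ) (p : Fin m → Fin k → ℝ)
    (Γ : Fin k → FinDist (PureMeta A)) (j : Fin k) : ℝ :=
  ∑ M ∈ Fintype.piFinset (fun j' => (Γ j').support),
    (∏ j', (Γ j').w (M j')) * Upure u p j M

/-- Nash equilibrium of the one-shot meta-game. -/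
def Nash (u : ∀ i : Fin m, (∀ r : Fin m, A r) → ℝ) (p : Fin m → Fin k → ℝ)
    (Γ : Fin k → FinDist (PureMeta A)) : Prop :=
  ∀ (j : Fin k) (Γ' : FinDist (PureMeta A)),
    U u p (Function.update Γ j Γ') j ≤ U u p Γ j

/-- Average utility of the clients governed by LLM `j`. -/
noncomputable def avgU (u : ∀ i : Fin m, (∀ r : Fin m, A r) → ℝ) (p : Fin m → Fin k → ℝ)
    (Γ : Fin k → FinDist (PureMeta A)) (j : Fin k) : ℝ :=
  U u p Γ j / ∑ i, p i j

/-- A meta-action is role-homogeneous if every pure meta-action in its support is a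
tuple of point-mass mixed actions. -/
def RoleHomogeneous (Γ : FinDist (PureMeta A)) : Prop :=
  ∀ M ∈ Γ.support, ∃ a : ∀ i : Fin m, A i, M = diracProfile a


/-- `Γhat` is the role-homogeneous flattening of `Γ`: draw a pure meta-action `M ∼ Γ`, then draw
actions `a i ∼ M i` independently across roles and output the tuple of point masses
`(δ_{a 1},…,δ_{a m})`. -/
def Flattens (Γ Γhat : FinDist (PureMeta A)) : Prop :=
  RoleHomogeneous Γhat ∧
  ∀ a : ∀ i : Fin m, A i,
    Γhat.w (diracProfile a) = ∑ M ∈ Γ.support, Γ.w M * ∏ i, (M i).1 (a i)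

/-- Moment functional of a meta-action. -/
noncomputable def mom (Γ : FinDist (PureMeta A)) (S : Finset (Fin m)) (a : ∀ r, A r) : ℝ :=
  ∑ M ∈ Γ.support, Γ.w M * ∏ r ∈ S, (M r).1 (a r)

lemma diracProfile_injective : Function.Injective (diracProfile (A := A)) := by
  intro a b h
  funext i
  have h1 : Mixed.dirac (a i) = Mixed.dirac (b i) := congrFun h i
  have h2 : (Mixed.dirac (a i)).1 (a i) = (Mixed.dirac (b i)).1 (a i) := by rw [h1]
  by_contra hne
  simp [Mixed.dirac, hne] at h2

/-- Sum over the support of a role-homogeneous distribution can be reindexed by action tuples. -/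
lemma sum_roleHomogeneous (Γhat : FinDist (PureMeta A)) (hh : RoleHomogeneous Γhat)
    (f : PureMeta A → ℝ) :
    ∑ N ∈ Γhat.support, Γhat.w N * f N
      = ∑ b : ∀ i : Fin m, A i, Γhat.w (diracProfile b) * f (diracProfile b) := by
  classical
  have hsub : Γhat.support ⊆ Finset.image (diracProfile (A := A)) Finset.univ := by
    intro N hN
    obtain ⟨a, rfl⟩ := hh N hN
    exact Finset.mem_image.2 ⟨a, Finset.mem_univ a, rfl⟩
  rw [Finset.sum_subset hsub (fun N _ hN => by
    rw [Γhat.zero_of_not_mem N hN, zero_mul])]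
  rw [Finset.sum_image (fun x _ y _ h => diracProfile_injective h)]

/-- Moment matching: flattening preserves all mixed moments. -/
lemma mom_flatten (Γ Γhat : FinDist (PureMeta A)) (hflat : Flattens Γ Γhat)
    (S : Finset (Fin m)) (a : ∀ r, A r) : mom Γhat S a = mom Γ S a := by
  classical
  unfold mom
  rw [sum_roleHomogeneous Γhat hflat.1]
  have h1 : ∀ b : ∀ i : Fin m, A i,
      Γhat.w (diracProfile b) * ∏ r ∈ S, (diracProfile b r).1 (a r)
      = ∑ M ∈ Γ.support, Γ.w M * ((∏ i, (M i).1 (b i)) *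
          ∏ r ∈ S, (if a r = b r then (1:ℝ) else 0)) := by
    intro b
    rw [hflat.2 b, Finset.sum_mul]
    refine Finset.sum_congr rfl fun M _ => ?_
    have hd : (∏ r ∈ S, (diracProfile b r).1 (a r))
        = ∏ r ∈ S, (if a r = b r then (1:ℝ) else 0) :=
      Finset.prod_congr rfl fun r _ => by simp [diracProfile, Mixed.dirac]
    rw [hd, mul_assoc]
  rw [Finset.sum_congr rfl fun b _ => h1 b, Finset.sum_comm]
  refine Finset.sum_congr rfl fun M _ => ?_
  rw [← Finset.mul_sum]
  congr 1
  have h2 : ∀ b : ∀ i : Fin m, A i,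
      (∏ i, (M i).1 (b i)) * ∏ r ∈ S, (if a r = b r then (1:ℝ) else 0)
      = ∏ i, ((M i).1 (b i) * if i ∈ S then (if a i = b i then (1:ℝ) else 0) else 1) := by
    intro b
    rw [Finset.prod_mul_distrib]
    congr 1
    rw [← Finset.prod_filter]
    congr 1
    simp
  rw [Finset.sum_congr rfl fun b _ => h2 b]
  have h3 := (Finset.prod_univ_sum (fun _ : Fin m => (Finset.univ : Finset _))
    (fun i x => (M i).1 x * if i ∈ S then (if a i = x then (1:ℝ) else 0) else 1)).symm
  rw [show Fintype.piFinset (fun _ : Fin m => (Finset.univ : Finset _)) = Finset.univ by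
    simp] at h3
  rw [h3]
  have h4 : ∀ i : Fin m,
      (∑ x, (M i).1 x * if i ∈ S then (if a i = x then (1:ℝ) else 0) else 1)
      = if i ∈ S then (M i).1 (a i) else 1 := by
    intro i
    by_cases hi : i ∈ S
    · simp [hi]
    · simp [hi, (M i).2.2]
  rw [Finset.prod_congr rfl fun i _ => h4 i, ← Finset.prod_filter]
  congr 1
  simp

/-- Utility expressed via moment functionals. -/
lemma U_eq_moments (u : ∀ i : Fin m, (∀ r : Fin m, A r) → ℝ) (p : Fin m → Fin k → ℝ)
    (Γ : Fin k → FinDist (PureMeta A)) (ℓ : Fin k) :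
    U u p Γ ℓ = ∑ i, ∑ g : Fin m → Fin k,
      if g i = ℓ then (∏ r, p r (g r)) *
        ∑ a : ∀ r : Fin m, A r,
          (∏ j', mom (Γ j') (Finset.univ.filter fun r => g r = j') a) * u i a
      else 0 := by
  classical
  unfold U Upure
  simp only [Finset.mul_sum]
  rw [Finset.sum_comm]
  refine Finset.sum_congr rfl fun i _ => ?_
  rw [Finset.sum_comm]
  refine Finset.sum_congr rfl fun g _ => ?_
  by_cases hg : g i = ℓ
  · simp only [hg, if_true]
    unfold expPay
    simp only [Finset.mul_sum]
    rw [Finset.sum_comm]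
    refine Finset.sum_congr rfl fun a _ => ?_
    have core : ∑ M ∈ Fintype.piFinset (fun j' => (Γ j').support),
        (∏ j', (Γ j').w (M j')) * ∏ r, (M (g r) r).1 (a r)
        = ∏ j', mom (Γ j') (Finset.univ.filter fun r => g r = j') a := by
      have hfib : ∀ M : Fin k → PureMeta A,
          (∏ r, (M (g r) r).1 (a r))
          = ∏ j', ∏ r ∈ Finset.univ.filter fun r => g r = j', (M j' r).1 (a r) := by
        intro M
        rw [← Finset.prod_fiberwise_of_maps_to (fun r _ => Finset.mem_univ (g r))
          (fun r => (M (g r) r).1 (a r))]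
        exact Finset.prod_congr rfl fun j' _ => Finset.prod_congr rfl fun r hr => by
          rw [(Finset.mem_filter.1 hr).2]
      calc ∑ M ∈ Fintype.piFinset (fun j' => (Γ j').support),
            (∏ j', (Γ j').w (M j')) * ∏ r, (M (g r) r).1 (a r)
          = ∑ M ∈ Fintype.piFinset (fun j' => (Γ j').support),
            ∏ j', ((Γ j').w (M j') *
              ∏ r ∈ Finset.univ.filter fun r => g r = j', (M j' r).1 (a r)) := by
            refine Finset.sum_congr rfl fun M _ => ?_
            rw [hfib M, Finset.prod_mul_distrib]
        _ = ∏ j', ∑ N ∈ (Γ j').support,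
              ((Γ j').w N * ∏ r ∈ Finset.univ.filter fun r => g r = j', (N r).1 (a r)) :=
            (Finset.prod_univ_sum (fun j' => (Γ j').support)
              (fun j' N => (Γ j').w N *
                ∏ r ∈ Finset.univ.filter fun r => g r = j', (N r).1 (a r))).symm
        _ = _ := rfl
    calc ∑ M ∈ Fintype.piFinset (fun j' => (Γ j').support),
          (∏ j', (Γ j').w (M j')) *
            ((∏ r, p r (g r)) * ((∏ r, (M (g r) r).1 (a r)) * u i a))
        = (∏ r, p r (g r)) *
            ((∑ M ∈ Fintype.piFinset (fun j' => (Γ j').support),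
              (∏ j', (Γ j').w (M j')) * ∏ r, (M (g r) r).1 (a r)) * u i a) := by
          rw [Finset.sum_mul, Finset.mul_sum]
          exact Finset.sum_congr rfl fun M _ => by ring
      _ = _ := by rw [core]
  · simp [hg]

/-- Replacing the meta-action of LLM `j` by its role-homogeneous flattening does not change the
utility of any LLM `ℓ`, whatever the meta-actions of the other LLMs are. -/
theorem flattening_preserves_utilities
    {m k : ℕ} {A : Fin m → Type} [∀ i, Fintype (A i)] [∀ i, DecidableEq (A i)]
    (u : ∀ i : Fin m, (∀ r : Fin m, A r) → ℝ) (p : Fin m → Fin k → ℝ)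
    (hp0 : ∀ i j, 0 ≤ p i j) (hp1 : ∀ i, ∑ j, p i j = 1)
    (Γ : Fin k → FinDist (PureMeta A)) (j : Fin k)
    (Γhat : FinDist (PureMeta A)) (hflat : Flattens (Γ j) Γhat) :
    ∀ ℓ : Fin k, U u p (Function.update Γ j Γhat) ℓ = U u p Γ ℓ := by
  classical
  intro ℓ
  have hmom : ∀ (j' : Fin k) (S : Finset (Fin m)) (a : ∀ r, A r),
      mom (Function.update Γ j Γhat j') S a = mom (Γ j') S a := by
    intro j' S a
    by_cases hjj : j' = j
    · subst hjj
      rw [Function.update_self]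
      exact mom_flatten (Γ j') Γhat hflat S a
    · rw [Function.update_of_ne hjj]
  rw [U_eq_moments, U_eq_moments]
  simp only [hmom]

end MetaGame
end

section
/- Suppose every LLM is single-role, i.e., for every LLM j there is at most one role i with p_i^j > 0. For a profile Γ of meta-actions, define the aggregate mixed action of role i as M_i^{agg}(Γ) := Σ_{j∈L} p_i^j · E_{M∼Γ^j}[M_i^j]. Then: (i) for every Nash equilibrium Γ of the one-shot meta-game, the aggregate profile (M_1^{agg}(Γ),…,M_m^{agg}(Γ)) is a mixed Nash equilibrium of the base game; and (ii) for every mixed Nash equilibrium (x_1,…,x_m) of the base game, the profile of pure meta-actions defined by M_i^j := x_i for every j with p_i^j > 0 is a Nash equilibrium of the one-shot meta-game whose aggregate profile equals (x_1,…,x_m). -/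
open Finset

namespace MetaGame

variable {m k : ℕ} {A : Fin m → Type} [∀ i, Fintype (A i)] [∀ i, DecidableEq (A i)]

/-- Mixed Nash equilibrium of the base game. -/
def BaseNash (u : ∀ i : Fin m, (∀ r : Fin m, A r) → ℝ) (x : ∀ i : Fin m, Mixed (A i)) : Prop :=
  ∀ (i : Fin m) (α : Mixed (A i)),
    expPay (u i) (Function.update x i α) ≤ expPay (u i) x

end MetaGame

/-! Because every LLM serves a single role, no two clients of one base-game match are governed
by the same LLM; the LLMs randomize independently and payoffs are multilinear, so the utility of
an LLM `j` serving role `i` is `p i j` times the base payoff of role `i` when it plays `j`'s mean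
mixed action against the aggregate actions of the other roles. Thus `Γ` is a meta-game
equilibrium iff every LLM's mean action is a best response to the aggregate profile. The
aggregate action of role `i` is a convex combination of these mean actions, so by linearity in
role `i`'s action one of them does at least as well as the aggregate, and no deviation can beat
the aggregate either. Conversely, if every LLM plays a base equilibrium `x`, all mean actions and
the aggregate profile equal `x`. -/

open Function

lemma exists_pos_le_sum_mul {ι : Type*} [Fintype ι] {c : ι → ℝ} (hc0 : ∀ j, 0 ≤ c j)
    (hc1 : ∑ j, c j = 1) (v : ι → ℝ) : ∃ j, 0 < c j ∧ v j ≤ ∑ j', c j' * v j' := by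
  classical
  have hfilter : ∀ f : ι → ℝ, ∑ j ∈ univ.filter (0 < c ·), c j * f j = ∑ j, c j * f j :=
    fun f => sum_filter_of_ne fun j _ h => (hc0 j).lt_of_ne' (left_ne_zero_of_mul h)
  obtain ⟨j₀, -, hj₀⟩ := exists_lt_of_sum_lt (s := univ) (f := 0) (g := c) (by simp [hc1])
  obtain ⟨j, hj, hle⟩ := exists_le_of_sum_le (s := univ.filter (0 < c ·)) ⟨j₀, by simpa using hj₀⟩
    (f := fun j => c j * v j) (g := fun j => c j * ∑ j', c j' * v j') (by
      simp only [hfilter]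
      rw [← sum_mul, hc1, one_mul])
  have hcj : 0 < c j := (mem_filter.mp hj).2
  exact ⟨j, hcj, le_of_mul_le_mul_left hle hcj⟩

lemma sum_mul_prod_eq_prod_sum_mul {β ι : Type*} {s : Finset β} {w : β → ℝ}
    (hw : ∑ x ∈ s, w x = 1) {t : Finset ι} (ht : ∀ r ∈ t, ∀ r' ∈ t, r = r') (φ : ι → β → ℝ) :
    ∑ x ∈ s, w x * ∏ r ∈ t, φ r x = ∏ r ∈ t, ∑ x ∈ s, w x * φ r x := by
  classical
  rcases t.eq_empty_or_nonempty with rfl | ⟨r, hr⟩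
  · simp [hw]
  · rw [eq_singleton_iff_unique_mem.mpr ⟨hr, fun r' hr' => ht r' hr' r hr⟩]
    simp

/-- Expectation of a product of functions of the draws of pairwise distinct independent
components. -/
lemma sum_piFinset_mul_prod_comp_injective {ι κ β : Type*} [Fintype ι] [Fintype κ]
    [DecidableEq κ] {s : κ → Finset β} {w : κ → β → ℝ} (hw : ∀ j, ∑ x ∈ s j, w j x = 1)
    {g : ι → κ} (hg : Injective g) (φ : ι → β → ℝ) :
    ∑ M ∈ Fintype.piFinset s, (∏ j, w j (M j)) * ∏ r, φ r (M (g r)) =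
      ∏ r, ∑ x ∈ s (g r), w (g r) x * φ r x := by
  have hfiber : ∀ j, ∀ r ∈ univ.filter (g · = j), ∀ r' ∈ univ.filter (g · = j), r = r' :=
    fun j r hr r' hr' => hg ((mem_filter.mp hr).2.trans (mem_filter.mp hr').2.symm)
  calc ∑ M ∈ Fintype.piFinset s, (∏ j, w j (M j)) * ∏ r, φ r (M (g r))
      = ∑ M ∈ Fintype.piFinset s, ∏ j, w j (M j) * ∏ r ∈ univ.filter (g · = j), φ r (M j) := by
        refine sum_congr rfl fun M _ => ?_
        rw [prod_mul_distrib, ← prod_fiberwise univ g]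
        congr 1
        exact prod_congr rfl fun j _ => prod_congr rfl fun r hr => by rw [(mem_filter.mp hr).2]
    _ = ∏ j, ∑ x ∈ s j, w j x * ∏ r ∈ univ.filter (g · = j), φ r x :=
        (prod_univ_sum s fun j x => w j x * ∏ r ∈ univ.filter (g · = j), φ r x).symm
    _ = ∏ j, ∏ r ∈ univ.filter (g · = j), ∑ x ∈ s j, w j x * φ r x :=
        prod_congr rfl fun j _ => sum_mul_prod_eq_prod_sum_mul (hw j) (hfiber j) φ
    _ = ∏ r, ∑ x ∈ s (g r), w (g r) x * φ r x := by
        rw [← prod_fiberwise univ g]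
        exact prod_congr rfl fun j _ => prod_congr rfl fun r hr => by rw [(mem_filter.mp hr).2]

namespace MetaGame

section MultilinearExtension

variable {m : ℕ} {A : Fin m → Type} [∀ i, Fintype (A i)]

/-- `expPay` at arbitrary real vectors: the argument evaluates it at scaled and summed mixed
actions. -/
noncomputable def multilinExt (u : (∀ r : Fin m, A r) → ℝ) (σ : ∀ r, A r → ℝ) : ℝ :=
  ∑ a : ∀ r : Fin m, A r, (∏ r, σ r (a r)) * u a

lemma expPay_eq_multilinExt (u : (∀ r : Fin m, A r) → ℝ) (σ : ∀ r, Mixed (A r)) :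
    expPay u σ = multilinExt u (fun r => (σ r).1) := rfl

lemma expPay_update (u : (∀ r : Fin m, A r) → ℝ) (σ : ∀ r, Mixed (A r)) (i : Fin m)
    (α : Mixed (A i)) :
    expPay u (update σ i α) = multilinExt u (update (fun r => (σ r).1) i α.1) := by
  rw [expPay_eq_multilinExt]
  congr 1
  funext r
  exact apply_update (fun _ x => x.1) σ i α r

lemma multilinExt_update_sum {ι : Type*} (u : (∀ r : Fin m, A r) → ℝ) (σ : ∀ r, A r → ℝ)
    (i : Fin m) (s : Finset ι) (c : ι → ℝ) (f : ι → A i → ℝ) :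
    multilinExt u (update σ i fun a => ∑ j ∈ s, c j * f j a) =
      ∑ j ∈ s, c j * multilinExt u (update σ i (f j)) := by
  have hprod : ∀ (τ : A i → ℝ) (a : ∀ r, A r),
      ∏ r, update σ i τ r (a r) = τ (a i) * ∏ r ∈ univ \ {i}, σ r (a r) := fun τ a => by
    rw [← prod_update_of_mem (mem_univ i)]
    exact prod_congr rfl fun r _ => apply_update (fun r x => x (a r)) σ i τ r
  simp only [multilinExt, hprod, mul_sum, sum_mul]
  rw [sum_comm]
  exact sum_congr rfl fun j _ => sum_congr rfl fun a _ => by ring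

lemma sum_piFinset_multilinExt {κ : Type*} (u : (∀ r : Fin m, A r) → ℝ) (t : Fin m → Finset κ)
    (f : ∀ r, κ → A r → ℝ) :
    ∑ g ∈ Fintype.piFinset t, multilinExt u (fun r => f r (g r)) =
      multilinExt u (fun r a => ∑ j ∈ t r, f r j a) := by
  simp only [multilinExt, prod_univ_sum, sum_mul]
  exact sum_comm

lemma sum_ite_mul_multilinExt {κ : Type*} [Fintype κ] [DecidableEq κ]
    (u : (∀ r : Fin m, A r) → ℝ) (c : Fin m → κ → ℝ) (f : ∀ r, κ → A r → ℝ) (i : Fin m) (j : κ) :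
    ∑ g : Fin m → κ,
        (if g i = j then (∏ r, c r (g r)) * multilinExt u (fun r => f r (g r)) else 0) =
      c i j * multilinExt u (update (fun r a => ∑ j', c r j' * f r j' a) i (f i j)) := by
  have hscale : ∀ g : Fin m → κ, (∏ r, c r (g r)) * multilinExt u (fun r => f r (g r)) =
      multilinExt u (fun r a => c r (g r) * f r (g r) a) := fun g => by
    simp only [multilinExt, mul_sum, prod_mul_distrib, mul_assoc]
  have hfilter : univ.filter (fun g : Fin m → κ => g i = j) =
      Fintype.piFinset (update (fun _ => (univ : Finset κ)) i {j}) := by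
    rw [Fintype.piFinset_update_singleton_eq_filter_piFinset_eq (fun _ => univ) i (mem_univ j),
      Fintype.piFinset_univ]
  rw [← sum_filter, hfilter]
  simp only [hscale]
  rw [sum_piFinset_multilinExt u _ fun r j' a => c r j' * f r j' a]
  have hupdate := apply_update (fun r (t : Finset κ) a => ∑ j' ∈ t, c r j' * f r j' a)
    (fun _ => univ) i {j}
  rw [funext hupdate, multilinExt_update_sum, sum_singleton]

end MultilinearExtension

section SingleRole

variable {m k : ℕ} {A : Fin m → Type} [∀ i, Fintype (A i)]

noncomputable def FinDist.mean (Γ : FinDist (PureMeta A)) (i : Fin m) : Mixed (A i) :=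
  ⟨fun a => ∑ M ∈ Γ.support, Γ.w M * (M i).1 a,
    fun a => sum_nonneg fun M _ => mul_nonneg (Γ.nonneg M) ((M i).2.1 a), by
      rw [sum_comm]
      simp_rw [← mul_sum, fun M : PureMeta A => (M i).2.2, mul_one]
      exact Γ.sum_one⟩

lemma FinDist.mean_pure (M : PureMeta A) : (FinDist.pure M).mean = M := by
  funext i
  apply Subtype.ext
  funext a
  simp [FinDist.mean, FinDist.pure]

/-- The aggregate mixed action `M_i^agg(Γ)`. -/
noncomputable def aggregate (p : Fin m → Fin k → ℝ) (Γ : Fin k → FinDist (PureMeta A))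
    (i : Fin m) : A i → ℝ :=
  fun a => ∑ j, p i j * ((Γ j).mean i).1 a

def SingleRole (p : Fin m → Fin k → ℝ) : Prop :=
  ∀ (j : Fin k) (i i' : Fin m), 0 < p i j → 0 < p i' j → i = i'

def IsBestResponse (v : (∀ r, A r) → ℝ) (σ : ∀ r, A r → ℝ) (i : Fin m) (τ : A i → ℝ) : Prop :=
  ∀ α : Mixed (A i), multilinExt v (update σ i α.1) ≤ multilinExt v (update σ i τ)

variable {p : Fin m → Fin k → ℝ}

lemma SingleRole.eq_zero_of_ne (hsingle : SingleRole p) (hp0 : ∀ i j, 0 ≤ p i j) {i r : Fin m}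
    {j : Fin k} (hij : 0 < p i j) (hr : r ≠ i) : p r j = 0 :=
  (hp0 r j).eq_or_lt.elim Eq.symm fun hrj => absurd (hsingle j r i hrj hij) hr

lemma SingleRole.injective_of_prod_ne_zero (hsingle : SingleRole p) (hp0 : ∀ i j, 0 ≤ p i j)
    {g : Fin m → Fin k} (hg : ∏ r, p r (g r) ≠ 0) : Injective g := by
  have hpos : ∀ r, 0 < p r (g r) := fun r =>
    (hp0 _ _).lt_of_ne' (prod_ne_zero_iff.mp hg r (mem_univ r))
  exact fun r r' hrr' => hsingle (g r) r r' (hpos r) (hrr' ▸ hpos r')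

lemma sum_piFinset_mul_multilinExt (Γ : Fin k → FinDist (PureMeta A)) {g : Fin m → Fin k}
    (hg : Injective g) (v : (∀ r, A r) → ℝ) :
    ∑ M ∈ Fintype.piFinset (fun j => (Γ j).support),
        (∏ j, (Γ j).w (M j)) * multilinExt v (fun r => (M (g r) r).1) =
      multilinExt v (fun r => ((Γ (g r)).mean r).1) := by
  simp only [multilinExt, mul_sum]
  rw [sum_comm]
  refine sum_congr rfl fun a _ => ?_
  simp only [← mul_assoc, ← sum_mul]
  congr 1
  exact sum_piFinset_mul_prod_comp_injective (fun j => (Γ j).sum_one) hg fun r M => (M r).1 (a r)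

lemma U_eq_sum (u : Fin m → (∀ r : Fin m, A r) → ℝ) (hp0 : ∀ i j, 0 ≤ p i j)
    (hsingle : SingleRole p) (Γ : Fin k → FinDist (PureMeta A)) (j : Fin k) :
    U u p Γ j = ∑ i, p i j * multilinExt (u i) (update (aggregate p Γ) i ((Γ j).mean i).1) := by
  simp only [U, Upure, mul_sum]
  rw [sum_comm]
  refine sum_congr rfl fun i _ => ?_
  rw [sum_comm]
  refine (sum_congr rfl fun g _ => ?_).trans
    (sum_ite_mul_multilinExt (u i) p (fun r j' => ((Γ j').mean r).1) i j)
  split_ifs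
  · by_cases hg : ∏ r, p r (g r) = 0
    · simp [hg]
    · rw [← sum_piFinset_mul_multilinExt Γ (hsingle.injective_of_prod_ne_zero hp0 hg), mul_sum]
      exact sum_congr rfl fun M _ => by rw [expPay_eq_multilinExt]; ring
  · simp

lemma update_aggregate_update_of_eq_zero {i : Fin m} {j : Fin k} (hi : ∀ r ≠ i, p r j = 0)
    (Γ : Fin k → FinDist (PureMeta A)) (Γ' : FinDist (PureMeta A)) (τ : A i → ℝ) :
    update (aggregate p (update Γ j Γ')) i τ = update (aggregate p Γ) i τ := by
  funext r
  rcases eq_or_ne r i with rfl | hr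
  · simp
  · simp only [update_of_ne hr]
    funext a
    refine sum_congr rfl fun j' _ => ?_
    rcases eq_or_ne j' j with rfl | hj'
    · simp [hi r hr]
    · rw [update_of_ne hj']

lemma U_update_of_eq_zero (u : Fin m → (∀ r : Fin m, A r) → ℝ) (hp0 : ∀ i j, 0 ≤ p i j)
    (hsingle : SingleRole p) {i : Fin m} {j : Fin k} (hi : ∀ r ≠ i, p r j = 0)
    (Γ : Fin k → FinDist (PureMeta A)) (Γ' : FinDist (PureMeta A)) :
    U u p (update Γ j Γ') j =
      p i j * multilinExt (u i) (update (aggregate p Γ) i (Γ'.mean i).1) := by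
  rw [U_eq_sum u hp0 hsingle, sum_eq_single i (fun r _ hr => by rw [hi r hr, zero_mul]) (by simp),
    update_self, update_aggregate_update_of_eq_zero hi]

theorem nash_iff_forall_isBestResponse_mean (u : Fin m → (∀ r : Fin m, A r) → ℝ)
    (hp0 : ∀ i j, 0 ≤ p i j) (hsingle : SingleRole p) (Γ : Fin k → FinDist (PureMeta A)) :
    Nash u p Γ ↔
      ∀ i j, 0 < p i j → IsBestResponse (u i) (aggregate p Γ) i ((Γ j).mean i).1 := by
  constructor
  · intro hN i j hij α
    have hi : ∀ r ≠ i, p r j = 0 := fun r => hsingle.eq_zero_of_ne hp0 hij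
    have hdev := hN j (FinDist.pure (update (Γ j).mean i α))
    have hself := U_update_of_eq_zero u hp0 hsingle hi Γ (Γ j)
    rw [update_eq_self] at hself
    rw [U_update_of_eq_zero u hp0 hsingle hi, hself, FinDist.mean_pure, update_self] at hdev
    exact le_of_mul_le_mul_left hdev hij
  · intro hbest j Γ'
    rw [U_eq_sum u hp0 hsingle, U_eq_sum u hp0 hsingle]
    refine sum_le_sum fun i _ => ?_
    rcases (hp0 i j).eq_or_lt with hij | hij
    · simp [← hij]
    · rw [update_self, update_aggregate_update_of_eq_zero fun r => hsingle.eq_zero_of_ne hp0 hij]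
      exact mul_le_mul_of_nonneg_left (hbest i j hij (Γ'.mean i)) hij.le

theorem baseNash_of_nash (u : Fin m → (∀ r : Fin m, A r) → ℝ) (hp0 : ∀ i j, 0 ≤ p i j)
    (hp1 : ∀ i, ∑ j, p i j = 1) (hsingle : SingleRole p) {Γ : Fin k → FinDist (PureMeta A)}
    (hN : Nash u p Γ) {x : ∀ i, Mixed (A i)} (hx : (fun i => (x i).1) = aggregate p Γ) :
    BaseNash u x := by
  intro i α
  have hbest := (nash_iff_forall_isBestResponse_mean u hp0 hsingle Γ).mp hN
  set payoff : Fin k → ℝ := fun j => multilinExt (u i) (update (aggregate p Γ) i ((Γ j).mean i).1)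
  have hmix : multilinExt (u i) (aggregate p Γ) = ∑ j, p i j * payoff j := by
    conv_lhs => rw [← update_eq_self i (aggregate p Γ)]
    exact multilinExt_update_sum (u i) (aggregate p Γ) i univ (p i) fun j => ((Γ j).mean i).1
  obtain ⟨j, hij, hle⟩ := exists_pos_le_sum_mul (hp0 i) (hp1 i) payoff
  calc expPay (u i) (update x i α)
      = multilinExt (u i) (update (aggregate p Γ) i α.1) := by rw [expPay_update, hx]
    _ ≤ payoff j := hbest i j hij α
    _ ≤ multilinExt (u i) (aggregate p Γ) := hmix ▸ hle
    _ = expPay (u i) x := by rw [expPay_eq_multilinExt, hx]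

theorem nash_pure_of_baseNash (u : Fin m → (∀ r : Fin m, A r) → ℝ) (hp0 : ∀ i j, 0 ≤ p i j)
    (hp1 : ∀ i, ∑ j, p i j = 1) (hsingle : SingleRole p) {x : ∀ i, Mixed (A i)}
    (hx : BaseNash u x) : Nash u p (fun _ => FinDist.pure x) := by
  have hagg : aggregate p (fun _ => FinDist.pure x) = fun i => (x i).1 := by
    funext i a
    simp only [aggregate, FinDist.mean_pure, ← sum_mul, hp1, one_mul]
  refine (nash_iff_forall_isBestResponse_mean u hp0 hsingle _).mpr fun i j _ α => ?_
  rw [hagg, FinDist.mean_pure, update_eq_self, ← expPay_update, ← expPay_eq_multilinExt]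
  exact hx i α

end SingleRole

theorem single_role_aggregate_equilibria_general
    {m k : ℕ} {A : Fin m → Type} [∀ i, Fintype (A i)]
    (u : ∀ i : Fin m, (∀ r : Fin m, A r) → ℝ) (p : Fin m → Fin k → ℝ)
    (hp0 : ∀ i j, 0 ≤ p i j) (hp1 : ∀ i, ∑ j, p i j = 1)
    (hsingle : ∀ (j : Fin k) (i i' : Fin m), 0 < p i j → 0 < p i' j → i = i') :
    (∀ Γ : Fin k → FinDist (PureMeta A), Nash u p Γ →
      ∀ Magg : ∀ i : Fin m, Mixed (A i),
        (∀ (i : Fin m) (a : A i),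
          (Magg i).1 a = ∑ j, p i j * ∑ M ∈ (Γ j).support, (Γ j).w M * (M i).1 a) →
        BaseNash u Magg) ∧
    (∀ x : ∀ i : Fin m, Mixed (A i), BaseNash u x →
      Nash u p (fun _ => FinDist.pure x) ∧
      ∀ (i : Fin m) (a : A i), ∑ j, p i j * (x i).1 a = (x i).1 a) :=
  ⟨fun _ hN _ hMagg => baseNash_of_nash u hp0 hp1 hsingle hN (funext fun i => funext (hMagg i)),
    fun _ hx => ⟨nash_pure_of_baseNash u hp0 hp1 hsingle hx,
      fun i a => by rw [← sum_mul, hp1, one_mul]⟩⟩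

/-- When every LLM is single-role: (i) the aggregate outcome of every Nash equilibrium of the
one-shot meta-game is a mixed Nash equilibrium of the base game, and (ii) every mixed Nash
equilibrium `x` of the base game arises as the aggregate outcome of the meta-game Nash equilibrium
in which each LLM plays the pure meta-action `x`. -/
theorem single_role_aggregate_equilibria
    {m k : ℕ} {A : Fin m → Type} [∀ i, Fintype (A i)] [∀ i, DecidableEq (A i)]
    (u : ∀ i : Fin m, (∀ r : Fin m, A r) → ℝ) (p : Fin m → Fin k → ℝ)
    (hp0 : ∀ i j, 0 ≤ p i j) (hp1 : ∀ i, ∑ j, p i j = 1)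
    (hsingle : ∀ (j : Fin k) (i i' : Fin m), 0 < p i j → 0 < p i' j → i = i') :
    (∀ Γ : Fin k → FinDist (PureMeta A), Nash u p Γ →
      ∀ Magg : ∀ i : Fin m, Mixed (A i),
        (∀ (i : Fin m) (a : A i),
          (Magg i).1 a = ∑ j, p i j * ∑ M ∈ (Γ j).support, (Γ j).w M * (M i).1 a) →
        BaseNash u Magg) ∧
    (∀ x : ∀ i : Fin m, Mixed (A i), BaseNash u x →
      Nash u p (fun _ => FinDist.pure x) ∧
      ∀ (i : Fin m) (a : A i), ∑ j, p i j * (x i).1 a = (x i).1 a) :=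
  single_role_aggregate_equilibria_general u p hp0 hp1 hsingle

end MetaGame
end

section
/- In the Prisoner's Dilemma meta-game, for any real parameters with 0 > X > Y > Z there exists p₀ ∈ (0,1) such that for every p ∈ (p₀, 1), every Nash equilibrium Γ of the one-shot meta-game satisfies Ū^1(Γ) < Ū^2(Γ). -/
/-!
Let `S` be the expected number of roles in which the large LLM cooperates. Cross-play payoffs are
nonpositive, and in self-play each cooperating role gains at most `K = max (X - Y) (Z - 2Y)` over
mutual defection, where `Y + K < 0`; hence `U₀ ≤ p²(2Y + KS)`. Since deviating to
always-cooperate guarantees `2p²X + 2p(1-p)Z`, equilibrium forces `pKS ≥ 2p(X - Y) + 2(1-p)Z`.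
The small LLM can deviate to always-defect, which earns `Y` against defection and `0` against
cooperation, so its average utility is at least `Y(1 - pS/2)`, while that of the large LLM is at
most `p(Y + KS/2)`. Their difference is at least `(1-p)Y - (pS/2)(Y + K)`, which by the bound on
`S` exceeds an affine function of `p` that is positive at `p = 1`.
-/


open Finset

namespace MetaGame

variable {m k : ℕ} {A : Fin m → Type} [∀ i, Fintype (A i)] [∀ i, DecidableEq (A i)]

/-- Prisoner's Dilemma payoffs; `false` is Cooperate (`C`), `true` is Defect (`D`). -/
def pdu (X Y Z : ℝ) (i : Fin 2) (a : ∀ _ : Fin 2, Bool) : ℝ :=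
  if a 0 = a 1 then (if a i = false then X else Y)
  else (if a i = false then Z else 0)

/-- Client shares in the two-LLM Prisoner's Dilemma meta-game: LLM `0` governs a share `pp` of
each role, LLM `1` the remaining `1 - pp`. -/
def pdp (pp : ℝ) : Fin 2 → Fin 2 → ℝ := fun _ j => if j = 0 then pp else 1 - pp

namespace FinDist

def expect {α : Type} (μ : FinDist α) (f : α → ℝ) : ℝ :=
  ∑ x ∈ μ.support, μ.w x * f x

theorem mem_support_pure {α : Type} {x y : α} (h : y ∈ (FinDist.pure x).support) : y = x :=
  Finset.mem_singleton.mp h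

end FinDist

section ProdExpect

variable {ι α : Type} [Fintype ι] [DecidableEq ι]

/-- Expectation under the product of independent finitely supported distributions;
`U u p Γ j` is `prodExpect Γ (Upure u p j)` by definition. -/
def prodExpect (Γ : ι → FinDist α) (F : (ι → α) → ℝ) : ℝ :=
  ∑ M ∈ Fintype.piFinset (fun j => (Γ j).support), (∏ j, (Γ j).w (M j)) * F M

theorem prodExpect_mono {Γ : ι → FinDist α} {F G : (ι → α) → ℝ}
    (h : ∀ M ∈ Fintype.piFinset (fun j => (Γ j).support), F M ≤ G M) :
    prodExpect Γ F ≤ prodExpect Γ G :=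
  Finset.sum_le_sum fun M hM =>
    mul_le_mul_of_nonneg_left (h M hM) (Finset.prod_nonneg fun j _ => (Γ j).nonneg _)

theorem prodExpect_congr {Γ : ι → FinDist α} {F G : (ι → α) → ℝ}
    (h : ∀ M ∈ Fintype.piFinset (fun j => (Γ j).support), F M = G M) :
    prodExpect Γ F = prodExpect Γ G :=
  Finset.sum_congr rfl fun M hM => by rw [h M hM]

theorem prodExpect_const (Γ : ι → FinDist α) (c : ℝ) : prodExpect Γ (fun _ => c) = c := by
  rw [prodExpect, ← Finset.sum_mul, ← Finset.prod_univ_sum]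
  simp [FinDist.sum_one]

theorem prodExpect_eval (Γ : ι → FinDist α) (j₀ : ι) (f : α → ℝ) :
    prodExpect Γ (fun M => f (M j₀)) = (Γ j₀).expect f := by
  have factor : ∀ M : ι → α, (∏ j, (Γ j).w (M j)) * f (M j₀)
      = ∏ j, (Γ j).w (M j) * (if j = j₀ then f (M j) else 1) := by
    intro M
    rw [Finset.prod_mul_distrib, Finset.prod_ite_eq' Finset.univ j₀ (fun j => f (M j))]
    simp
  have marginal : ∀ j, ∑ x ∈ (Γ j).support, (Γ j).w x * (if j = j₀ then f x else 1)
      = if j = j₀ then (Γ j₀).expect f else 1 := by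
    intro j
    split_ifs with h
    · subst h; rfl
    · simp [FinDist.sum_one]
  simp only [prodExpect, factor]
  rw [← Finset.prod_univ_sum (fun j => (Γ j).support)
    (fun j x => (Γ j).w x * (if j = j₀ then f x else 1))]
  simp only [marginal, Finset.prod_ite_eq', Finset.mem_univ, if_true]

theorem prodExpect_const_add_mul_eval (Γ : ι → FinDist α) (j₀ : ι) (c d : ℝ)
    (f : α → ℝ) : prodExpect Γ (fun M => c + d * f (M j₀)) = c + d * (Γ j₀).expect f := by
  have linear : prodExpect Γ (fun M => c + d * f (M j₀))
      = prodExpect Γ (fun _ => c) + d * prodExpect Γ (fun M => f (M j₀)) := by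
    simp only [prodExpect, mul_add, Finset.sum_add_distrib, Finset.mul_sum, mul_left_comm d]
  rw [linear, prodExpect_const, prodExpect_eval]

end ProdExpect

theorem _root_.Fintype.sum_fin_two_arrow {β M : Type*} [Fintype β] [AddCommMonoid M]
    (f : (Fin 2 → β) → M) : ∑ a, f a = ∑ x, ∑ y, f ![x, y] := by
  rw [← (finTwoArrowEquiv β).symm.sum_comp, Fintype.sum_prod_type]
  rfl

section PrisonersDilemma

variable {X Y Z : ℝ}

local notation "PDMeta" => PureMeta (fun _ : Fin 2 => Bool)

def coopProb (σ : Mixed Bool) : ℝ := σ.1 false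

theorem coopProb_nonneg (σ : Mixed Bool) : 0 ≤ coopProb σ := σ.2.1 false

theorem Mixed.val_true (σ : Mixed Bool) : σ.1 true = 1 - coopProb σ := by
  have h := σ.2.2
  rw [Fintype.sum_bool] at h
  rw [coopProb]
  linarith

theorem coopProb_le_one (σ : Mixed Bool) : coopProb σ ≤ 1 := by
  linarith [σ.2.1 true, Mixed.val_true σ]

theorem coopProb_diracProfile (a : Fin 2 → Bool) (r : Fin 2) :
    coopProb (diracProfile a r) = if a r = false then 1 else 0 := by
  simp only [coopProb, diracProfile, Mixed.dirac]
  cases a r <;> rfl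

/-- Expected payoff of a player cooperating with probability `s` against one cooperating with
probability `t`. -/
def pdPay (X Y Z s t : ℝ) : ℝ := s * t * X + s * (1 - t) * Z + (1 - s) * (1 - t) * Y

theorem expPay_pdu_zero (σ : Fin 2 → Mixed Bool) :
    expPay (pdu X Y Z 0) σ = pdPay X Y Z (coopProb (σ 0)) (coopProb (σ 1)) := by
  simp only [expPay, Fintype.sum_fin_two_arrow, Fintype.sum_bool, Fin.prod_univ_two, pdu,
    Matrix.cons_val_zero, Matrix.cons_val_one, Matrix.cons_val_fin_one, Mixed.val_true, pdPay,
    coopProb, Bool.false_eq_true, Bool.true_eq_false, if_true, if_false]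
  ring

theorem expPay_pdu_one (σ : Fin 2 → Mixed Bool) :
    expPay (pdu X Y Z 1) σ = pdPay X Y Z (coopProb (σ 1)) (coopProb (σ 0)) := by
  simp only [expPay, Fintype.sum_fin_two_arrow, Fintype.sum_bool, Fin.prod_univ_two, pdu,
    Matrix.cons_val_zero, Matrix.cons_val_one, Matrix.cons_val_fin_one, Mixed.val_true, pdPay,
    coopProb, Bool.false_eq_true, Bool.true_eq_false, if_true, if_false]
  ring

theorem pdPay_nonpos (hX : X ≤ 0) (hY : Y ≤ 0) (hZ : Z ≤ 0) {s t : ℝ} (hs₀ : 0 ≤ s)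
    (hs₁ : s ≤ 1) (ht₀ : 0 ≤ t) (ht₁ : t ≤ 1) : pdPay X Y Z s t ≤ 0 := by
  have hst : 0 ≤ s * t := mul_nonneg hs₀ ht₀
  have hs't : 0 ≤ s * (1 - t) := mul_nonneg hs₀ (by linarith)
  have hs't' : 0 ≤ (1 - s) * (1 - t) := mul_nonneg (by linarith) (by linarith)
  unfold pdPay
  nlinarith

theorem le_pdPay_one_left (hZX : Z ≤ X) {t : ℝ} (ht₀ : 0 ≤ t) : Z ≤ pdPay X Y Z 1 t := by
  unfold pdPay
  nlinarith

theorem pdPay_zero_left (t : ℝ) : pdPay X Y Z 0 t = (1 - t) * Y := by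
  unfold pdPay
  ring

theorem pdPay_add_pdPay_swap_le {K : ℝ} (hXK : X - Y ≤ K) (hZK : Z - 2 * Y ≤ K) {s t : ℝ}
    (hs₀ : 0 ≤ s) (hs₁ : s ≤ 1) (ht₀ : 0 ≤ t) (ht₁ : t ≤ 1) :
    pdPay X Y Z s t + pdPay X Y Z t s ≤ 2 * Y + K * (s + t) := by
  have self_play : pdPay X Y Z s t + pdPay X Y Z t s
      = 2 * Y + 2 * (s * t) * (X + Y - Z) + (s + t) * (Z - 2 * Y) := by
    unfold pdPay
    ring
  have hst : 0 ≤ s * t := mul_nonneg hs₀ ht₀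
  have hst' : 2 * (s * t) ≤ s + t := by nlinarith
  rw [self_play]
  rcases le_total 0 (X + Y - Z) with h | h <;> nlinarith

def coopCount (N : PDMeta) : ℝ := coopProb (N 0) + coopProb (N 1)

theorem Upure_pd_zero (q : ℝ) (M : Fin 2 → PDMeta) :
    Upure (pdu X Y Z) (pdp q) 0 M
      = q ^ 2 * (pdPay X Y Z (coopProb (M 0 0)) (coopProb (M 0 1))
          + pdPay X Y Z (coopProb (M 0 1)) (coopProb (M 0 0)))
        + q * (1 - q) * (pdPay X Y Z (coopProb (M 0 0)) (coopProb (M 1 1))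
          + pdPay X Y Z (coopProb (M 0 1)) (coopProb (M 1 0))) := by
  simp only [Upure, Fin.sum_univ_two, Fintype.sum_fin_two_arrow, Fin.prod_univ_two, pdp,
    Matrix.cons_val_zero, Matrix.cons_val_one, Matrix.cons_val_fin_one, expPay_pdu_zero,
    expPay_pdu_one, one_ne_zero, if_true, if_false]
  ring

theorem Upure_pd_one (q : ℝ) (M : Fin 2 → PDMeta) :
    Upure (pdu X Y Z) (pdp q) 1 M
      = (1 - q) ^ 2 * (pdPay X Y Z (coopProb (M 1 0)) (coopProb (M 1 1))
          + pdPay X Y Z (coopProb (M 1 1)) (coopProb (M 1 0)))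
        + q * (1 - q) * (pdPay X Y Z (coopProb (M 1 0)) (coopProb (M 0 1))
          + pdPay X Y Z (coopProb (M 1 1)) (coopProb (M 0 0))) := by
  simp only [Upure, Fin.sum_univ_two, Fintype.sum_fin_two_arrow, Fin.prod_univ_two, pdp,
    Matrix.cons_val_zero, Matrix.cons_val_one, Matrix.cons_val_fin_one, expPay_pdu_zero,
    expPay_pdu_one, zero_ne_one, one_ne_zero, if_true, if_false]
  ring

theorem Upure_pd_zero_le (hX : X ≤ 0) (hY : Y ≤ 0) (hZ : Z ≤ 0) {K q : ℝ}
    (hXK : X - Y ≤ K) (hZK : Z - 2 * Y ≤ K) (hq₀ : 0 ≤ q) (hq₁ : q ≤ 1) (M : Fin 2 → PDMeta) :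
    Upure (pdu X Y Z) (pdp q) 0 M ≤ q ^ 2 * (2 * Y + K * coopCount (M 0)) := by
  have pay_nonpos : ∀ σ τ : Mixed Bool, pdPay X Y Z (coopProb σ) (coopProb τ) ≤ 0 :=
    fun σ τ => pdPay_nonpos hX hY hZ (coopProb_nonneg σ)
      (coopProb_le_one σ) (coopProb_nonneg τ) (coopProb_le_one τ)
  have self_play := pdPay_add_pdPay_swap_le hXK hZK (coopProb_nonneg (M 0 0))
    (coopProb_le_one (M 0 0)) (coopProb_nonneg (M 0 1)) (coopProb_le_one (M 0 1))
  have cross_play := add_nonpos (pay_nonpos (M 0 0) (M 1 1)) (pay_nonpos (M 0 1) (M 1 0))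
  rw [Upure_pd_zero, coopCount]
  nlinarith [mul_le_mul_of_nonneg_left self_play (sq_nonneg q),
    mul_nonpos_of_nonneg_of_nonpos (mul_nonneg hq₀ (sub_nonneg.mpr hq₁)) cross_play]

theorem le_Upure_pd_zero_of_cooperate (hZX : Z ≤ X) {q : ℝ} (hq₀ : 0 ≤ q)
    (hq₁ : q ≤ 1) (M : Fin 2 → PDMeta) (hM : M 0 = diracProfile fun _ => false) :
    2 * q ^ 2 * X + 2 * q * (1 - q) * Z ≤ Upure (pdu X Y Z) (pdp q) 0 M := by
  have cross_play := add_le_add (le_pdPay_one_left (Y := Y) hZX (coopProb_nonneg (M 1 1)))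
    (le_pdPay_one_left (Y := Y) hZX (coopProb_nonneg (M 1 0)))
  rw [Upure_pd_zero, hM]
  simp only [coopProb_diracProfile, if_true]
  have self_play : pdPay X Y Z 1 1 = X := by simp [pdPay]
  rw [self_play]
  nlinarith [mul_le_mul_of_nonneg_left cross_play (mul_nonneg hq₀ (sub_nonneg.mpr hq₁))]

theorem Upure_pd_one_of_defect (q : ℝ) (M : Fin 2 → PDMeta)
    (hM : M 1 = diracProfile fun _ => true) :
    Upure (pdu X Y Z) (pdp q) 1 M = 2 * (1 - q) * Y - q * (1 - q) * Y * coopCount (M 0) := by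
  rw [Upure_pd_one, hM, coopCount]
  simp only [coopProb_diracProfile, Bool.true_eq_false, if_false, pdPay_zero_left]
  ring

theorem U_pd_zero_le (hX : X ≤ 0) (hY : Y ≤ 0) (hZ : Z ≤ 0) {K q : ℝ} (hXK : X - Y ≤ K)
    (hZK : Z - 2 * Y ≤ K) (hq₀ : 0 ≤ q) (hq₁ : q ≤ 1) (Γ : Fin 2 → FinDist PDMeta) :
    U (pdu X Y Z) (pdp q) Γ 0 ≤ q ^ 2 * (2 * Y + K * (Γ 0).expect coopCount) :=
  calc U (pdu X Y Z) (pdp q) Γ 0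
      ≤ prodExpect Γ (fun M => q ^ 2 * (2 * Y) + q ^ 2 * K * coopCount (M 0)) :=
        prodExpect_mono fun M _ => by
          linarith [Upure_pd_zero_le hX hY hZ hXK hZK hq₀ hq₁ M]
    _ = q ^ 2 * (2 * Y + K * (Γ 0).expect coopCount) := by
        rw [prodExpect_const_add_mul_eval]
        ring

theorem le_U_pd_zero_of_nash (hZX : Z ≤ X) {q : ℝ} (hq₀ : 0 ≤ q) (hq₁ : q ≤ 1)
    {Γ : Fin 2 → FinDist PDMeta} (hΓ : Nash (pdu X Y Z) (pdp q) Γ) :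
    2 * q ^ 2 * X + 2 * q * (1 - q) * Z ≤ U (pdu X Y Z) (pdp q) Γ 0 := by
  set cooperate := FinDist.pure (diracProfile fun _ : Fin 2 => false)
  calc 2 * q ^ 2 * X + 2 * q * (1 - q) * Z
      = prodExpect (Function.update Γ 0 cooperate)
          (fun _ => 2 * q ^ 2 * X + 2 * q * (1 - q) * Z) :=
        (prodExpect_const _ _).symm
    _ ≤ U (pdu X Y Z) (pdp q) (Function.update Γ 0 cooperate) 0 :=
        prodExpect_mono fun M hM => le_Upure_pd_zero_of_cooperate hZX hq₀ hq₁ M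
          (FinDist.mem_support_pure (by simpa using Fintype.mem_piFinset.mp hM 0))
    _ ≤ U (pdu X Y Z) (pdp q) Γ 0 := hΓ 0 cooperate

theorem le_U_pd_one_of_nash {q : ℝ} {Γ : Fin 2 → FinDist PDMeta}
    (hΓ : Nash (pdu X Y Z) (pdp q) Γ) :
    2 * (1 - q) * Y - q * (1 - q) * Y * (Γ 0).expect coopCount
      ≤ U (pdu X Y Z) (pdp q) Γ 1 := by
  set defect := FinDist.pure (diracProfile fun _ : Fin 2 => true)
  calc 2 * (1 - q) * Y - q * (1 - q) * Y * (Γ 0).expect coopCount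
      = prodExpect (Function.update Γ 1 defect)
          (fun M => 2 * (1 - q) * Y + -(q * (1 - q) * Y) * coopCount (M 0)) := by
        rw [prodExpect_const_add_mul_eval, Function.update_of_ne Fin.zero_ne_one]
        ring
    _ = U (pdu X Y Z) (pdp q) (Function.update Γ 1 defect) 1 :=
        prodExpect_congr fun M hM => by
          rw [Upure_pd_one_of_defect q M
            (FinDist.mem_support_pure (by simpa using Fintype.mem_piFinset.mp hM 1))]
          ring
    _ ≤ U (pdu X Y Z) (pdp q) Γ 1 := hΓ 1 defect

theorem sum_pdp_zero (q : ℝ) : ∑ i, pdp q i 0 = 2 * q := by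
  simp only [Fin.sum_univ_two, pdp, if_true]
  ring

theorem sum_pdp_one (q : ℝ) : ∑ i, pdp q i 1 = 2 * (1 - q) := by
  simp only [Fin.sum_univ_two, pdp, one_ne_zero, if_false]
  ring

end PrisonersDilemma

theorem exists_lt_one_forall_gt_pos {c B : ℝ} (hc : 0 < c) (hB : B < 0) :
    ∃ p₀ : ℝ, 0 < p₀ ∧ p₀ < 1 ∧ ∀ q, p₀ < q → 0 < q * c + (1 - q) * B := by
  have hBc : B - c < 0 := by linarith
  refine ⟨B / (B - c), div_pos_of_neg_of_neg hB hBc, (div_lt_one_of_neg hBc).mpr (by linarith),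
    fun q hq => ?_⟩
  rw [div_lt_iff_of_neg hBc] at hq
  linarith

theorem div_lt_div_of_pd_bounds {X Y Z K q S U₀ U₁ : ℝ} (hK : 0 < K) (hYK : Y + K < 0)
    (hq₀ : 0 < q) (hq₁ : q < 1) (hU₀ : U₀ ≤ q ^ 2 * (2 * Y + K * S))
    (hU₀' : 2 * q ^ 2 * X + 2 * q * (1 - q) * Z ≤ U₀)
    (hU₁ : 2 * (1 - q) * Y - q * (1 - q) * Y * S ≤ U₁)
    (hq : 0 < q * (-(Y + K) * (X - Y)) + (1 - q) * (-(Y + K) * Z + K * Y)) :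
    U₀ / (2 * q) < U₁ / (2 * (1 - q)) := by
  have coop : 2 * q * (X - Y) + 2 * (1 - q) * Z ≤ q * K * S := by
    have h : q * (2 * q * (X - Y) + 2 * (1 - q) * Z) ≤ q * (q * K * S) := by nlinarith
    exact le_of_mul_le_mul_left h hq₀
  have gap : q * S * (Y + K) < 2 * (1 - q) * Y := by
    have h : K * (q * S * (Y + K)) < K * (2 * (1 - q) * Y) := by
      nlinarith [mul_le_mul_of_nonneg_left coop (by linarith : 0 ≤ -(Y + K))]
    exact lt_of_mul_lt_mul_left h hK.le
  have hq₁' : 0 < 1 - q := by linarith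
  rw [div_lt_div_iff₀ (by linarith) (by linarith)]
  nlinarith [mul_pos (mul_pos hq₀ hq₁') (sub_pos.mpr gap),
    mul_le_mul_of_nonneg_right hU₀ hq₁'.le, mul_le_mul_of_nonneg_right hU₁ hq₀.le]

/-- In the Prisoner's Dilemma meta-game with `0 > X > Y > Z`, for `p` sufficiently large, in every
Nash equilibrium the average utility of the large LLM is smaller than that of the small LLM. -/
theorem pd_large_llm_worse_off
    (X Y Z : ℝ) (hX : X < 0) (hY : Y < X) (hZ : Z < Y) :
    ∃ p₀ : ℝ, 0 < p₀ ∧ p₀ < 1 ∧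
      ∀ pp : ℝ, p₀ < pp → pp < 1 →
        ∀ Γ : Fin 2 → FinDist (PureMeta (fun _ : Fin 2 => Bool)),
          Nash (pdu X Y Z) (pdp pp) Γ →
          avgU (pdu X Y Z) (pdp pp) Γ 0 < avgU (pdu X Y Z) (pdp pp) Γ 1 := by
  obtain ⟨K, hXK, hZK, hYK⟩ : ∃ K, X - Y ≤ K ∧ Z - 2 * Y ≤ K ∧ Y + K < 0 :=
    ⟨max (X - Y) (Z - 2 * Y), le_max_left _ _, le_max_right _ _, by
      linarith [max_lt (show X - Y < -Y by linarith) (show Z - 2 * Y < -Y by linarith)]⟩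
  have hK : 0 < K := by linarith
  obtain ⟨p₀, hp₀, hp₀₁, threshold⟩ :=
    exists_lt_one_forall_gt_pos (c := -(Y + K) * (X - Y)) (B := -(Y + K) * Z + K * Y)
      (by nlinarith) (by nlinarith)
  refine ⟨p₀, hp₀, hp₀₁, fun pp hpp hpp₁ Γ hΓ => ?_⟩
  have hpp₀ : 0 < pp := hp₀.trans hpp
  rw [avgU, avgU, sum_pdp_zero, sum_pdp_one]
  exact div_lt_div_of_pd_bounds hK hYK hpp₀ hpp₁
    (U_pd_zero_le hX.le (by linarith) (by linarith) hXK hZK hpp₀.le hpp₁.le Γ)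
    (le_U_pd_zero_of_nash (by linarith) hpp₀.le hpp₁.le hΓ) (le_U_pd_one_of_nash hΓ)
    (threshold pp hpp)

end MetaGame
end

section
/- In the Prisoner's Dilemma meta-game, for any real parameters with 0 > X > Y > Z there exists p₀ ∈ (0,1) such that for every p ∈ (p₀, 1): for every meta-action Γ² of LLM 2, U_1(δ_{CC}, Γ²) ≥ 2p(pX + (1−p)Z) and U_1(δ_{DD}, Γ²) ≤ 2p·pY, and moreover 2p(pX + (1−p)Z) > 2p·pY. In particular, for every p ∈ (p₀,1), U_1(δ_{CC}, Γ²) > U_1(δ_{DD}, Γ̃²) for all meta-actions Γ², Γ̃² of LLM 2, so instructing all its clients to defect is never a best response for LLM 1. -/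
open Finset

namespace MetaGame

variable {m k : ℕ} {A : Fin m → Type} [∀ i, Fintype (A i)] [∀ i, DecidableEq (A i)]

/-- The role-homogeneous pure meta-action `δ_CC` instructing all clients to cooperate. -/
noncomputable def deltaCC : FinDist (PureMeta (fun _ : Fin 2 => Bool)) :=
  FinDist.pure (diracProfile (fun _ => false))

/-- The role-homogeneous pure meta-action `δ_DD` instructing all clients to defect. -/
noncomputable def deltaDD : FinDist (PureMeta (fun _ : Fin 2 => Bool)) :=
  FinDist.pure (diracProfile (fun _ => true))

private lemma sum_pi_two' {α : Type} [Fintype α] {M : Type} [AddCommMonoid M]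
    (f : (Fin 2 → α) → M) :
    ∑ g : Fin 2 → α, f g = ∑ a : α, ∑ b : α, f ![a, b] := by
  have : ∑ g : Fin 2 → α, f g = ∑ p : α × α, f ![p.1, p.2] :=
    Fintype.sum_equiv (piFinTwoEquiv _) _ _ (fun g => by
      congr 1; ext i; fin_cases i <;> simp [piFinTwoEquiv])
  rw [this, Fintype.sum_prod_type]

private lemma mixed_bool_sum (σ : Mixed Bool) : σ.1 true + σ.1 false = 1 := by
  have := σ.2.2; rwa [Fintype.sum_bool] at this

private lemma Upure_CC_ge (X Y Z pp : ℝ) (hXZ : Z ≤ X) (hpp0 : 0 ≤ pp) (hpp1 : pp ≤ 1)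
    (M : Fin 2 → PureMeta (fun _ : Fin 2 => Bool))
    (h0 : M 0 = diracProfile (fun _ => false)) :
    2 * pp * (pp * X + (1 - pp) * Z) ≤ Upure (pdu X Y Z) (pdp pp) 0 M := by
  have e : Upure (pdu X Y Z) (pdp pp) 0 M =
      2 * pp ^ 2 * X + pp * (1 - pp) *
        (((M 1 0).1 false * X + (M 1 0).1 true * Z) +
         ((M 1 1).1 false * X + (M 1 1).1 true * Z)) := by
    simp only [Upure, Fin.sum_univ_two, sum_pi_two', expPay, Fin.prod_univ_two,
      Matrix.cons_val_zero, Matrix.cons_val_one, Matrix.head_cons, h0,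
      diracProfile, Mixed.dirac, pdu, pdp, Fintype.sum_bool]
    norm_num; ring
  rw [e]
  have h0f := (M 1 0).2.1 false
  have h1f := (M 1 1).2.1 false
  have h0s : (M 1 0).1 true = 1 - (M 1 0).1 false := by
    have := mixed_bool_sum (M 1 0); linarith
  have h1s : (M 1 1).1 true = 1 - (M 1 1).1 false := by
    have := mixed_bool_sum (M 1 1); linarith
  rw [h0s, h1s]
  nlinarith [mul_nonneg (mul_nonneg hpp0 (by linarith : (0:ℝ) ≤ 1 - pp))
      (mul_nonneg h0f (by linarith : (0:ℝ) ≤ X - Z)),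
    mul_nonneg (mul_nonneg hpp0 (by linarith : (0:ℝ) ≤ 1 - pp))
      (mul_nonneg h1f (by linarith : (0:ℝ) ≤ X - Z))]

private lemma Upure_DD_le (X Y Z pp : ℝ) (hY : Y ≤ 0) (hpp0 : 0 ≤ pp) (hpp1 : pp ≤ 1)
    (M : Fin 2 → PureMeta (fun _ : Fin 2 => Bool))
    (h0 : M 0 = diracProfile (fun _ => true)) :
    Upure (pdu X Y Z) (pdp pp) 0 M ≤ 2 * pp * (pp * Y) := by
  have e : Upure (pdu X Y Z) (pdp pp) 0 M =
      2 * pp ^ 2 * Y + pp * (1 - pp) *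
        ((M 1 0).1 true * Y + (M 1 1).1 true * Y) := by
    simp only [Upure, Fin.sum_univ_two, sum_pi_two', expPay, Fin.prod_univ_two,
      Matrix.cons_val_zero, Matrix.cons_val_one, Matrix.head_cons, h0,
      diracProfile, Mixed.dirac, pdu, pdp, Fintype.sum_bool]
    norm_num; ring
  rw [e]
  have h0t := (M 1 0).2.1 true
  have h1t := (M 1 1).2.1 true
  nlinarith [mul_nonneg (mul_nonneg hpp0 (by linarith : (0:ℝ) ≤ 1 - pp))
      (mul_nonneg h0t (by linarith : (0:ℝ) ≤ -Y)),
    mul_nonneg (mul_nonneg hpp0 (by linarith : (0:ℝ) ≤ 1 - pp))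
      (mul_nonneg h1t (by linarith : (0:ℝ) ≤ -Y))]

private lemma weights_sum_one {m k : ℕ} {A : Fin m → Type} [∀ i, Fintype (A i)]
    (Γ : Fin k → FinDist (PureMeta A)) :
    ∑ M ∈ Fintype.piFinset (fun j' => (Γ j').support), ∏ j', (Γ j').w (M j') = 1 := by
  rw [← Finset.prod_univ_sum]
  simp [FinDist.sum_one]

private lemma U_ge {m k : ℕ} {A : Fin m → Type} [∀ i, Fintype (A i)] [∀ i, DecidableEq (A i)]
    (u : ∀ i : Fin m, (∀ r : Fin m, A r) → ℝ) (p : Fin m → Fin k → ℝ) (j : Fin k)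
    (Γ : Fin k → FinDist (PureMeta A)) (c : ℝ)
    (h : ∀ M ∈ Fintype.piFinset (fun j' => (Γ j').support), c ≤ Upure u p j M) :
    c ≤ U u p Γ j := by
  calc c = ∑ M ∈ Fintype.piFinset (fun j' => (Γ j').support),
        (∏ j', (Γ j').w (M j')) * c := by
        rw [← Finset.sum_mul, weights_sum_one, one_mul]
    _ ≤ U u p Γ j := Finset.sum_le_sum fun M hM =>
        mul_le_mul_of_nonneg_left (h M hM)
          (Finset.prod_nonneg fun j' _ => (Γ j').nonneg _)

private lemma U_le {m k : ℕ} {A : Fin m → Type} [∀ i, Fintype (A i)] [∀ i, DecidableEq (A i)]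
    (u : ∀ i : Fin m, (∀ r : Fin m, A r) → ℝ) (p : Fin m → Fin k → ℝ) (j : Fin k)
    (Γ : Fin k → FinDist (PureMeta A)) (c : ℝ)
    (h : ∀ M ∈ Fintype.piFinset (fun j' => (Γ j').support), Upure u p j M ≤ c) :
    U u p Γ j ≤ c := by
  calc U u p Γ j ≤ ∑ M ∈ Fintype.piFinset (fun j' => (Γ j').support),
        (∏ j', (Γ j').w (M j')) * c := Finset.sum_le_sum fun M hM =>
        mul_le_mul_of_nonneg_left (h M hM)
          (Finset.prod_nonneg fun j' _ => (Γ j').nonneg _)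
    _ = c := by rw [← Finset.sum_mul, weights_sum_one, one_mul]


/-- In the Prisoner's Dilemma meta-game with `0 > X > Y > Z`, for `p` sufficiently large:
against any meta-action of LLM `2`, `δ_CC` guarantees LLM `1` at least `2p(pX + (1−p)Z)` while
`δ_DD` yields at most `2p·pY`, and the former exceeds the latter; in particular all-defect is
never a best response for LLM `1`. -/
theorem pd_all_defect_never_best_response
    (X Y Z : ℝ) (hX : X < 0) (hY : Y < X) (hZ : Z < Y) :
    ∃ p₀ : ℝ, 0 < p₀ ∧ p₀ < 1 ∧
      ∀ pp : ℝ, p₀ < pp → pp < 1 →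
        (∀ Γ2 : FinDist (PureMeta (fun _ : Fin 2 => Bool)),
          2 * pp * (pp * X + (1 - pp) * Z) ≤ U (pdu X Y Z) (pdp pp) ![deltaCC, Γ2] 0 ∧
          U (pdu X Y Z) (pdp pp) ![deltaDD, Γ2] 0 ≤ 2 * pp * (pp * Y)) ∧
        2 * pp * (pp * Y) < 2 * pp * (pp * X + (1 - pp) * Z) ∧
        (∀ Γ2 Γ2' : FinDist (PureMeta (fun _ : Fin 2 => Bool)),
          U (pdu X Y Z) (pdp pp) ![deltaDD, Γ2'] 0 < U (pdu X Y Z) (pdp pp) ![deltaCC, Γ2] 0) := by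
  have hden : 0 < X - Y - Z := by linarith
  refine ⟨(-Z) / (X - Y - Z), div_pos (by linarith) hden, (div_lt_one hden).2 (by linarith), ?_⟩
  intro pp hp0 hp1
  have hppos : 0 < pp := lt_trans (div_pos (by linarith) hden) hp0
  have hp0' : (0:ℝ) ≤ pp := le_of_lt hppos
  have hp1' : pp ≤ 1 := le_of_lt hp1
  have hkey : -Z < pp * (X - Y - Z) := by
    have := (div_lt_iff₀ hden).1 hp0
    linarith
  have hgap : 2 * pp * (pp * Y) < 2 * pp * (pp * X + (1 - pp) * Z) := by
    have : pp * Y < pp * X + (1 - pp) * Z := by nlinarith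
    nlinarith
  have hCC : ∀ Γ2 : FinDist (PureMeta (fun _ : Fin 2 => Bool)),
      2 * pp * (pp * X + (1 - pp) * Z) ≤ U (pdu X Y Z) (pdp pp) ![deltaCC, Γ2] 0 := by
    intro Γ2
    refine U_ge _ _ _ _ _ fun M hM => ?_
    refine Upure_CC_ge X Y Z pp (by linarith) hp0' hp1' M ?_
    have := (Fintype.mem_piFinset.1 hM) 0
    simpa [deltaCC, FinDist.pure] using this
  have hDD : ∀ Γ2 : FinDist (PureMeta (fun _ : Fin 2 => Bool)),
      U (pdu X Y Z) (pdp pp) ![deltaDD, Γ2] 0 ≤ 2 * pp * (pp * Y) := by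
    intro Γ2
    refine U_le _ _ _ _ _ fun M hM => ?_
    refine Upure_DD_le X Y Z pp (by linarith) hp0' hp1' M ?_
    have := (Fintype.mem_piFinset.1 hM) 0
    simpa [deltaDD, FinDist.pure] using this
  exact ⟨fun Γ2 => ⟨hCC Γ2, hDD Γ2⟩, hgap,
    fun Γ2 Γ2' => lt_of_le_of_lt (hDD Γ2') (lt_of_lt_of_le hgap (hCC Γ2))⟩

end MetaGame
end
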